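/- Fix a real number R and a real ρ ≤ 0. Then min over pairs (T,V) with D(T∘V‖T×Q) ≥ R of D(T∘V‖Q∘P) is at least min over pairs (T,V) with supp(V) ⊆ supp(Q) of { D(T∘V‖Q∘P) − ρ·( R − D(T∘V‖T×Q) ) }. In the case of equality, every minimizer of the left-hand side also minimizes the right-hand side and satisfies D(T∘V‖T×Q) = R when ρ < 0 (respectively D(T∘V‖T×Q) ≥ R when ρ = 0). Conversely, if the right-hand minimum is attained by some (T_ρ,V_ρ) with D(T_ρ∘V_ρ‖T_ρ×Q) = R (respectively ≥ R when ρ = 0), then (T_ρ,V_ρ) also attains the left-hand minimum and equality holds. -/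

import Mathlib

open scoped BigOperators
open Filter Topology

/-- `f` is a probability mass function on a finite alphabet. -/
def IsPMF {α : Type*} [Fintype α] (f : α → ℝ) : Prop :=
  (∀ a, 0 ≤ f a) ∧ ∑ a, f a = 1

/-- `P` is a discrete memoryless channel from `𝓧` to `𝓨`. -/
def IsChannel {𝓧 𝓨 : Type*} [Fintype 𝓧] [Fintype 𝓨] (P : 𝓧 → 𝓨 → ℝ) : Prop :=
  ∀ x, IsPMF (P x)

/-- `V` is a conditional pmf on `𝓧` given `𝓨`. -/
def IsCondPMF {𝓧 𝓨 : Type*} [Fintype 𝓧] [Fintype 𝓨] (V : 𝓨 → 𝓧 → ℝ) : Prop :=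
  ∀ y, IsPMF (V y)

/-- one term `s·log(s/t)` of a KL divergence, with the conventions
    `0·log(0/t) = 0` and `s·log(s/0) = +∞` for `s > 0`. -/
noncomputable def klTerm (s t : ℝ) : EReal :=
  if s = 0 then 0 else if t = 0 then ⊤ else ((s * Real.log (s / t) : ℝ) : EReal)

/-- `D(T∘V ‖ Q∘P)`. -/
noncomputable def DQP {𝓧 𝓨 : Type*} [Fintype 𝓧] [Fintype 𝓨]
    (T : 𝓨 → ℝ) (V : 𝓨 → 𝓧 → ℝ) (Q : 𝓧 → ℝ) (P : 𝓧 → 𝓨 → ℝ) : EReal :=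
  ∑ y, ∑ x, klTerm (T y * V y x) (Q x * P x y)

/-- `D(T∘V ‖ T×Q)`. -/
noncomputable def DTQ {𝓧 𝓨 : Type*} [Fintype 𝓧] [Fintype 𝓨]
    (T : 𝓨 → ℝ) (V : 𝓨 → 𝓧 → ℝ) (Q : 𝓧 → ℝ) : EReal :=
  ∑ y, ∑ x, klTerm (T y * V y x) (T y * Q x)

/-- Gallager's function `E₀(ρ,Q)` (for `ρ > −1`). -/
noncomputable def E0 {𝓧 𝓨 : Type*} [Fintype 𝓧] [Fintype 𝓨]
    (ρ : ℝ) (Q : 𝓧 → ℝ) (P : 𝓧 → 𝓨 → ℝ) : ℝ :=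
  - Real.log (∑ y, (∑ x, Q x * P x y ^ (1 / (1 + ρ))) ^ (1 + ρ))

/-- The joint distribution `T_ρ∘V_ρ` on `𝓧 × 𝓨` (for `ρ > −1`). -/
noncomputable def Jrho {𝓧 𝓨 : Type*} [Fintype 𝓧] [Fintype 𝓨]
    (ρ : ℝ) (Q : 𝓧 → ℝ) (P : 𝓧 → 𝓨 → ℝ) (x : 𝓧) (y : 𝓨) : ℝ :=
  Q x * P x y ^ (1 / (1 + ρ)) * (∑ a, Q a * P a y ^ (1 / (1 + ρ))) ^ ρ /
    ∑ y', (∑ a, Q a * P a y' ^ (1 / (1 + ρ))) ^ (1 + ρ)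

/-- `max_{x : Q(x) > 0} P(y|x)`. -/
noncomputable def maxP {𝓧 𝓨 : Type*} (Q : 𝓧 → ℝ) (P : 𝓧 → 𝓨 → ℝ) (y : 𝓨) : ℝ :=
  ⨆ x : {x // 0 < Q x}, P x.1 y

/-- `E₀(−1,Q) = −log ∑_y max_{x : Q(x)>0} P(y|x)`. -/
noncomputable def E0m1 {𝓧 𝓨 : Type*} [Fintype 𝓧] [Fintype 𝓨]
    (Q : 𝓧 → ℝ) (P : 𝓧 → 𝓨 → ℝ) : ℝ :=
  - Real.log (∑ y, maxP Q P y)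

/-- `E₀(ρ,Q)` extended to `ρ = −1`. -/
noncomputable def E0full {𝓧 𝓨 : Type*} [Fintype 𝓧] [Fintype 𝓨]
    (ρ : ℝ) (Q : 𝓧 → ℝ) (P : 𝓧 → 𝓨 → ℝ) : ℝ :=
  if ρ = -1 then E0m1 Q P else E0 ρ Q P

/-- `T_{−1}(y) ∝ max_{a : Q(a)>0} P(y|a)`. -/
noncomputable def Tm1 {𝓧 𝓨 : Type*} [Fintype 𝓧] [Fintype 𝓨]
    (Q : 𝓧 → ℝ) (P : 𝓧 → 𝓨 → ℝ) (y : 𝓨) : ℝ :=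
  maxP Q P y / ∑ y', maxP Q P y'

/-- `V` is admissible at `ρ = −1`: `V(x|y) = 0` for every `x` outside
    `argmax_{a : Q(a)>0} P(y|a)`. -/
def AdmissibleAtM1 {𝓧 𝓨 : Type*} [Fintype 𝓧] [Fintype 𝓨]
    (Q : 𝓧 → ℝ) (P : 𝓧 → 𝓨 → ℝ) (V : 𝓨 → 𝓧 → ℝ) : Prop :=
  ∀ y x, ¬ (0 < Q x ∧ ∀ a, 0 < Q a → P a y ≤ P x y) → V y x = 0

/-- the error exponent `E_e(R,Q)`. -/
noncomputable def Ee {𝓧 𝓨 : Type*} [Fintype 𝓧] [Fintype 𝓨]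
    (R : ℝ) (Q : 𝓧 → ℝ) (P : 𝓧 → 𝓨 → ℝ) : EReal :=
  sInf {v | ∃ T : 𝓨 → ℝ, ∃ V : 𝓨 → 𝓧 → ℝ, IsPMF T ∧ IsCondPMF V ∧
    v = DQP T V Q P + max (DTQ T V Q - (R : EReal)) 0}

/-- the ML correct-decoding exponent `E_c^{ML}(R,Q)`. -/
noncomputable def EcML {𝓧 𝓨 : Type*} [Fintype 𝓧] [Fintype 𝓨]
    (R : ℝ) (Q : 𝓧 → ℝ) (P : 𝓧 → 𝓨 → ℝ) : EReal :=
  sInf {v | ∃ T : 𝓨 → ℝ, ∃ V : 𝓨 → 𝓧 → ℝ, IsPMF T ∧ IsCondPMF V ∧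
    v = DQP T V Q P + max ((R : EReal) - DTQ T V Q) 0}

/-- the strict correct-decoding exponent `E_c(R,Q)` (`+∞` if infeasible). -/
noncomputable def Ec {𝓧 𝓨 : Type*} [Fintype 𝓧] [Fintype 𝓨]
    (R : ℝ) (Q : 𝓧 → ℝ) (P : 𝓧 → 𝓨 → ℝ) : EReal :=
  sInf {v | ∃ T : 𝓨 → ℝ, ∃ V : 𝓨 → 𝓧 → ℝ, IsPMF T ∧ IsCondPMF V ∧
    (R : EReal) ≤ DTQ T V Q ∧ v = DQP T V Q P}

/-- the mutual information `I(Q∘P)`. -/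
noncomputable def MI {𝓧 𝓨 : Type*} [Fintype 𝓧] [Fintype 𝓨]
    (Q : 𝓧 → ℝ) (P : 𝓧 → 𝓨 → ℝ) : ℝ :=
  ∑ x, ∑ y, if Q x * P x y = 0 then 0
    else Q x * P x y * Real.log (P x y / ∑ a, Q a * P a y)

/-- the capacity `C(Z)` of the channel restricted to input letters in `Z`. -/
noncomputable def capacity {𝓧 𝓨 : Type*} [Fintype 𝓧] [Fintype 𝓨]
    (P : 𝓧 → 𝓨 → ℝ) (Z : Set 𝓧) : ℝ :=
  sSup {c | ∃ Q' : 𝓧 → ℝ, IsPMF Q' ∧ (∀ x, 0 < Q' x → x ∈ Z) ∧ c = MI Q' P}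

/-- `R_{−1}^{−}(Q)`. -/
noncomputable def Rm1minus {𝓧 𝓨 : Type*} [Fintype 𝓧] [Fintype 𝓨]
    (Q : 𝓧 → ℝ) (P : 𝓧 → 𝓨 → ℝ) : EReal :=
  sInf {v | ∃ V : 𝓨 → 𝓧 → ℝ, IsCondPMF V ∧ AdmissibleAtM1 Q P V ∧
    v = DTQ (Tm1 Q P) V Q}

/-- `R_{−1}^{+}(Q)`. -/
noncomputable def Rm1plus {𝓧 𝓨 : Type*} [Fintype 𝓧] [Fintype 𝓨]
    (Q : 𝓧 → ℝ) (P : 𝓧 → 𝓨 → ℝ) : EReal :=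
  sSup {v | ∃ V : 𝓨 → 𝓧 → ℝ, IsCondPMF V ∧ AdmissibleAtM1 Q P V ∧
    v = DTQ (Tm1 Q P) V Q}

/-- `F_ρ(T∘V, Q) = D(T∘V‖Q∘P) + ρ·D(T∘V‖T×Q)`. -/
noncomputable def Frho {𝓧 𝓨 : Type*} [Fintype 𝓧] [Fintype 𝓨]
    (ρ : ℝ) (T : 𝓨 → ℝ) (V : 𝓨 → 𝓧 → ℝ) (Q : 𝓧 → ℝ) (P : 𝓧 → 𝓨 → ℝ) : EReal :=
  DQP T V Q P + (ρ : EReal) * DTQ T V Q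

/-- the unconstrained penalized minimum
    `min_{T,V} { D(T∘V‖Q∘P) + ρ·(D(T∘V‖T×Q) − R) }`. -/
noncomputable def penMin {𝓧 𝓨 : Type*} [Fintype 𝓧] [Fintype 𝓨]
    (Q : 𝓧 → ℝ) (P : 𝓧 → 𝓨 → ℝ) (R ρ : ℝ) : EReal :=
  sInf {v | ∃ T : 𝓨 → ℝ, ∃ V : 𝓨 → 𝓧 → ℝ, IsPMF T ∧ IsCondPMF V ∧
    v = DQP T V Q P + (ρ : EReal) * (DTQ T V Q - (R : EReal))}

/-- the support-constrained penalized minimum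
    `min_{T,V : supp(V) ⊆ supp(Q)} { D(T∘V‖Q∘P) − ρ·(R − D(T∘V‖T×Q)) }`. -/
noncomputable def penMinS {𝓧 𝓨 : Type*} [Fintype 𝓧] [Fintype 𝓨]
    (Q : 𝓧 → ℝ) (P : 𝓧 → 𝓨 → ℝ) (R ρ : ℝ) : EReal :=
  sInf {v | ∃ T : 𝓨 → ℝ, ∃ V : 𝓨 → 𝓧 → ℝ, IsPMF T ∧ IsCondPMF V ∧
    (∀ y x, Q x = 0 → V y x = 0) ∧
    v = DQP T V Q P - (ρ : EReal) * ((R : EReal) - DTQ T V Q)}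


/-!
A pair `(T, V)` with `D(T∘V‖Q∘P) < ∞` puts no mass on a `Q`-null input in a row where `T > 0`;
replacing the rows where `T` vanishes by `Q` makes it admissible for the right-hand side without
changing either divergence. Since `ρ ≤ 0` and `R ≤ D(T∘V‖T×Q)`, the penalty `-ρ·(R - D(T∘V‖T×Q))`
is nonpositive, which gives the inequality; equality forces the penalty to vanish. Conversely a
penalized minimizer with vanishing penalty is feasible for the left-hand side. The right-hand
minimum is finite (a point mass on a pair `(x, y)` with `Q(x) P(y|x) > 0` is admissible), which
keeps `∞ - ∞` out of the equality cases.
-/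

namespace EReal

variable {ι : Type*} {s : Finset ι} {f : ι → EReal}

lemma sum_ne_bot (h : ∀ i ∈ s, f i ≠ ⊥) : ∑ i ∈ s, f i ≠ ⊥ := by
  induction s using Finset.cons_induction with
  | empty => simp
  | cons a s ha ih =>
    rw [Finset.forall_mem_cons] at h
    rw [Finset.sum_cons]
    exact add_ne_bot_iff.mpr ⟨h.1, ih h.2⟩

lemma sum_ne_top_iff (h : ∀ i ∈ s, f i ≠ ⊥) : ∑ i ∈ s, f i ≠ ⊤ ↔ ∀ i ∈ s, f i ≠ ⊤ := by
  induction s using Finset.cons_induction with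
  | empty => simp
  | cons a s ha ih =>
    rw [Finset.forall_mem_cons] at h
    rw [Finset.sum_cons, add_ne_top_iff_ne_top₂ h.1 (sum_ne_bot h.2), ih h.2,
      Finset.forall_mem_cons]

lemma coe_sub_mul_sub (a d R ρ : ℝ) :
    (a : EReal) - ρ * (R - d) = ((a - ρ * (R - d) : ℝ) : EReal) := by
  norm_cast

lemma coe_sub_mul_sub_le {a d R ρ : ℝ} (hρ : ρ ≤ 0) (hR : R ≤ d) :
    (a : EReal) - ρ * (R - d) ≤ a := by
  rw [coe_sub_mul_sub, EReal.coe_le_coe_iff]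
  nlinarith

lemma eq_of_coe_sub_mul_sub_eq {a d R ρ : ℝ} (hρ : ρ < 0)
    (h : (a : EReal) - ρ * (R - d) = a) : d = R := by
  rw [coe_sub_mul_sub, EReal.coe_eq_coe_iff, sub_eq_self, mul_eq_zero] at h
  linarith [h.resolve_left hρ.ne]

end EReal

lemma klTerm_ne_bot (s t : ℝ) : klTerm s t ≠ ⊥ := by
  unfold klTerm
  split_ifs <;> simp [-EReal.coe_mul]

lemma klTerm_ne_top_iff (s t : ℝ) : klTerm s t ≠ ⊤ ↔ (s ≠ 0 → t ≠ 0) := by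
  unfold klTerm
  split_ifs <;> simp_all [-EReal.coe_mul]

lemma sum_sum_klTerm_ne_bot {ι κ : Type*} [Fintype ι] [Fintype κ] (s t : ι → κ → ℝ) :
    ∑ i, ∑ j, klTerm (s i j) (t i j) ≠ ⊥ :=
  EReal.sum_ne_bot fun _ _ => EReal.sum_ne_bot fun _ _ => klTerm_ne_bot _ _

lemma sum_sum_klTerm_ne_top_iff {ι κ : Type*} [Fintype ι] [Fintype κ] (s t : ι → κ → ℝ) :
    ∑ i, ∑ j, klTerm (s i j) (t i j) ≠ ⊤ ↔ ∀ i j, s i j ≠ 0 → t i j ≠ 0 := by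
  simp only [EReal.sum_ne_top_iff fun _ _ => EReal.sum_ne_bot fun _ _ => klTerm_ne_bot _ _,
    EReal.sum_ne_top_iff fun _ _ => klTerm_ne_bot _ _, klTerm_ne_top_iff, Finset.mem_univ,
    forall_const]

lemma isPMF_single {α : Type*} [Fintype α] [DecidableEq α] (a : α) :
    IsPMF (Pi.single a (1 : ℝ)) :=
  ⟨fun b => by by_cases h : b = a <;> simp [h], by simp⟩

section Divergences

variable {𝓧 𝓨 : Type*} [Fintype 𝓧] [Fintype 𝓨]
  {T : 𝓨 → ℝ} {V V' : 𝓨 → 𝓧 → ℝ} {Q : 𝓧 → ℝ} {P : 𝓧 → 𝓨 → ℝ}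

lemma DQP_ne_bot : DQP T V Q P ≠ ⊥ := sum_sum_klTerm_ne_bot _ _

lemma DTQ_ne_bot : DTQ T V Q ≠ ⊥ := sum_sum_klTerm_ne_bot _ _

lemma DQP_ne_top_iff :
    DQP T V Q P ≠ ⊤ ↔ ∀ y x, T y * V y x ≠ 0 → Q x * P x y ≠ 0 :=
  sum_sum_klTerm_ne_top_iff _ _

lemma DTQ_ne_top_iff :
    DTQ T V Q ≠ ⊤ ↔ ∀ y x, T y * V y x ≠ 0 → T y * Q x ≠ 0 :=
  sum_sum_klTerm_ne_top_iff _ _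

lemma DTQ_ne_top_of_DQP_ne_top (h : DQP T V Q P ≠ ⊤) : DTQ T V Q ≠ ⊤ :=
  DTQ_ne_top_iff.mpr fun y x hTV =>
    mul_ne_zero (left_ne_zero_of_mul hTV) (left_ne_zero_of_mul (DQP_ne_top_iff.mp h y x hTV))

lemma DQP_congr (h : ∀ y x, T y * V y x = T y * V' y x) : DQP T V Q P = DQP T V' Q P := by
  simp only [DQP, h]

lemma DTQ_congr (h : ∀ y x, T y * V y x = T y * V' y x) : DTQ T V Q = DTQ T V' Q := by
  simp only [DTQ, h]

lemma exists_supported_of_DQP_ne_top (hQ : IsPMF Q) (hV : IsCondPMF V)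
    (h : DQP T V Q P ≠ ⊤) :
    ∃ V' : 𝓨 → 𝓧 → ℝ, IsCondPMF V' ∧ (∀ y x, Q x = 0 → V' y x = 0) ∧
      DQP T V' Q P = DQP T V Q P ∧ DTQ T V' Q = DTQ T V Q := by
  classical
  have hrow : ∀ y x, T y * (if T y = 0 then Q else V y) x = T y * V y x := by
    intro y x
    split_ifs with hT <;> simp [hT]
  refine ⟨fun y => if T y = 0 then Q else V y, fun y => ?_, fun y x hQx => ?_,
    DQP_congr hrow, DTQ_congr hrow⟩
  · dsimp only
    split_ifs
    exacts [hQ, hV y]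
  · dsimp only
    split_ifs with hT
    · exact hQx
    · by_contra hVx
      simpa [hQx] using DQP_ne_top_iff.mp h y x (mul_ne_zero hT hVx)

end Divergences

section PenalizedMinimum

variable {𝓧 𝓨 : Type*} [Fintype 𝓧] [Fintype 𝓨] {P : 𝓧 → 𝓨 → ℝ} {Q : 𝓧 → ℝ} {R ρ : ℝ}

lemma penMinS_le_of_DQP_ne_top (hQ : IsPMF Q) {T : 𝓨 → ℝ} {V : 𝓨 → 𝓧 → ℝ}
    (hT : IsPMF T) (hV : IsCondPMF V) (h : DQP T V Q P ≠ ⊤) :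
    penMinS Q P R ρ ≤ DQP T V Q P - (ρ : EReal) * ((R : EReal) - DTQ T V Q) := by
  obtain ⟨V', hV', hsupp, hDQP, hDTQ⟩ := exists_supported_of_DQP_ne_top hQ hV h
  rw [← hDQP, ← hDTQ]
  exact sInf_le ⟨T, V', hT, hV', hsupp, rfl⟩

lemma penMinS_le_Ec (hQ : IsPMF Q) (hρ : ρ ≤ 0) : penMinS Q P R ρ ≤ Ec R Q P := by
  refine le_sInf ?_
  rintro _ ⟨T, V, hT, hV, hR, rfl⟩
  by_cases h : DQP T V Q P = ⊤
  · simp [h]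
  refine (penMinS_le_of_DQP_ne_top hQ hT hV h).trans ?_
  have hd := DTQ_ne_top_of_DQP_ne_top h
  lift DTQ T V Q to ℝ using ⟨hd, DTQ_ne_bot⟩ with d
  lift DQP T V Q P to ℝ using ⟨h, DQP_ne_bot⟩ with a
  exact EReal.coe_sub_mul_sub_le hρ (EReal.coe_le_coe_iff.mp hR)

lemma penMinS_ne_top (hP : IsChannel P) (hQ : IsPMF Q) : penMinS Q P R ρ ≠ ⊤ := by
  classical
  obtain ⟨x₀, -, hx₀⟩ := Finset.exists_ne_zero_of_sum_ne_zero (hQ.2 ▸ one_ne_zero)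
  obtain ⟨y₀, -, hy₀⟩ := Finset.exists_ne_zero_of_sum_ne_zero ((hP x₀).2 ▸ one_ne_zero)
  set T : 𝓨 → ℝ := Pi.single y₀ 1
  set V : 𝓨 → 𝓧 → ℝ := fun _ => Pi.single x₀ 1
  have hsupp : ∀ y x, Q x = 0 → V y x = 0 := fun _ x hQx =>
    Pi.single_eq_of_ne (fun hx : x = x₀ => hx₀ (hx ▸ hQx)) _
  have hq : DQP T V Q P ≠ ⊤ := by
    refine DQP_ne_top_iff.mpr fun y x hTV => ?_
    obtain rfl : y = y₀ := by by_contra hy; simp [T, hy] at hTV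
    obtain rfl : x = x₀ := by by_contra hx; simp [V, hx] at hTV
    exact mul_ne_zero hx₀ hy₀
  have hd := DTQ_ne_top_of_DQP_ne_top hq
  refine ne_top_of_le_ne_top ?_ (sInf_le ⟨T, V, isPMF_single y₀, fun _ => isPMF_single x₀,
    hsupp, rfl⟩)
  lift DTQ T V Q to ℝ using ⟨hd, DTQ_ne_bot⟩ with d
  lift DQP T V Q P to ℝ using ⟨hq, DQP_ne_bot⟩ with a
  rw [EReal.coe_sub_mul_sub]
  exact EReal.coe_ne_top _

end PenalizedMinimum

theorem stmt_5_general {𝓧 𝓨 : Type*} [Fintype 𝓧] [Fintype 𝓨]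
    (P : 𝓧 → 𝓨 → ℝ) (hP : IsChannel P) (Q : 𝓧 → ℝ) (hQ : IsPMF Q)
    (R ρ : ℝ) (hρ : ρ ≤ 0) :
    penMinS Q P R ρ ≤ Ec R Q P
    ∧ (Ec R Q P = penMinS Q P R ρ →
        ∀ (T : 𝓨 → ℝ) (V : 𝓨 → 𝓧 → ℝ), IsPMF T → IsCondPMF V →
          (R : EReal) ≤ DTQ T V Q → DQP T V Q P = Ec R Q P →
          DQP T V Q P - (ρ : EReal) * ((R : EReal) - DTQ T V Q) = penMinS Q P R ρ
          ∧ (ρ < 0 → DTQ T V Q = (R : EReal))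
          ∧ (ρ = 0 → (R : EReal) ≤ DTQ T V Q))
    ∧ (∀ (T : 𝓨 → ℝ) (V : 𝓨 → 𝓧 → ℝ), IsPMF T → IsCondPMF V →
        (∀ y x, Q x = 0 → V y x = 0) →
        DQP T V Q P - (ρ : EReal) * ((R : EReal) - DTQ T V Q) = penMinS Q P R ρ →
        (ρ < 0 → DTQ T V Q = (R : EReal)) →
        (ρ = 0 → (R : EReal) ≤ DTQ T V Q) →
        ((R : EReal) ≤ DTQ T V Q ∧ DQP T V Q P = Ec R Q P)
        ∧ Ec R Q P = penMinS Q P R ρ) := by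
  have hle : penMinS Q P R ρ ≤ Ec R Q P := penMinS_le_Ec hQ hρ
  refine ⟨hle, fun hEc T V hT hV hR hDQP => ?_, fun T V hT hV hsupp hval hlt hzero => ?_⟩
  · have hq : DQP T V Q P ≠ ⊤ := hDQP ▸ hEc ▸ penMinS_ne_top hP hQ
    have hpen := penMinS_le_of_DQP_ne_top (R := R) (ρ := ρ) hQ hT hV hq
    have hd := DTQ_ne_top_of_DQP_ne_top hq
    rw [← hEc, ← hDQP] at hpen ⊢
    lift DTQ T V Q to ℝ using ⟨hd, DTQ_ne_bot⟩ with d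
    lift DQP T V Q P to ℝ using ⟨hq, DQP_ne_bot⟩ with a
    have hmin : (a : EReal) - ρ * (R - d) = a :=
      le_antisymm (EReal.coe_sub_mul_sub_le hρ (EReal.coe_le_coe_iff.mp hR)) hpen
    exact ⟨hmin, fun hneg => congrArg _ (EReal.eq_of_coe_sub_mul_sub_eq hneg hmin), fun _ => hR⟩
  · have hR : (R : EReal) ≤ DTQ T V Q := hρ.lt_or_eq.elim (fun h => (hlt h).ge) hzero
    have hpen : (ρ : EReal) * ((R : EReal) - DTQ T V Q) = 0 := by
      rcases hρ.lt_or_eq with h | h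
      · rw [hlt h, ← EReal.coe_sub, sub_self, EReal.coe_zero, mul_zero]
      · rw [h, EReal.coe_zero, zero_mul]
    rw [hpen, sub_zero] at hval
    have hEc : Ec R Q P = DQP T V Q P :=
      le_antisymm (sInf_le ⟨T, V, hT, hV, hR, rfl⟩) (hval ▸ hle)
    exact ⟨⟨hR, hEc.symm⟩, hEc.trans hval⟩

theorem stmt_5 {𝓧 𝓨 : Type*} [Fintype 𝓧] [Fintype 𝓨] [Nonempty 𝓧] [Nonempty 𝓨]
    (P : 𝓧 → 𝓨 → ℝ) (hP : IsChannel P) (Q : 𝓧 → ℝ) (hQ : IsPMF Q)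
    (R ρ : ℝ) (hρ : ρ ≤ 0) :
    penMinS Q P R ρ ≤ Ec R Q P
    ∧ (Ec R Q P = penMinS Q P R ρ →
        ∀ (T : 𝓨 → ℝ) (V : 𝓨 → 𝓧 → ℝ), IsPMF T → IsCondPMF V →
          (R : EReal) ≤ DTQ T V Q → DQP T V Q P = Ec R Q P →
          DQP T V Q P - (ρ : EReal) * ((R : EReal) - DTQ T V Q) = penMinS Q P R ρ
          ∧ (ρ < 0 → DTQ T V Q = (R : EReal))
          ∧ (ρ = 0 → (R : EReal) ≤ DTQ T V Q))
    ∧ (∀ (T : 𝓨 → ℝ) (V : 𝓨 → 𝓧 → ℝ), IsPMF T → IsCondPMF V →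
        (∀ y x, Q x = 0 → V y x = 0) →
        DQP T V Q P - (ρ : EReal) * ((R : EReal) - DTQ T V Q) = penMinS Q P R ρ →
        (ρ < 0 → DTQ T V Q = (R : EReal)) →
        (ρ = 0 → (R : EReal) ≤ DTQ T V Q) →
        ((R : EReal) ≤ DTQ T V Q ∧ DQP T V Q P = Ec R Q P)
        ∧ Ec R Q P = penMinS Q P R ρ) :=
  stmt_5_general P hP Q hQ R ρ hρ
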